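/- Let H be a graph and (X,Y) a partition of V(H). Let D_X and D_Y be kernel-perfect orientations of the induced subgraphs H[X] and H[Y] respectively. If D is the orientation of H agreeing with D_X on X, with D_Y on Y, and orienting every edge between X and Y from its endpoint in Y to its endpoint in X, then D is a kernel-perfect orientation of H. -/
import Mathlib


open SimpleGraph

/-- Adjacency in the line graph `L(G)`: two distinct edges sharing an endpoint. -/
def lineAdj {V : Type*} (G : SimpleGraph V) (e f : G.edgeSet) : Prop :=
  e ≠ f ∧ ∃ x : V, x ∈ (e : Sym2 V) ∧ x ∈ (f : Sym2 V)

/-- `D` is an orientation of the (loopless) adjacency relation `Adj`: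
every arc of `D` is an edge, and every edge gets at least one of its two arcs. -/
def IsOrientation {α : Type*} (Adj : α → α → Prop) (D : α → α → Prop) : Prop :=
  (∀ a b, D a b → Adj a b) ∧ (∀ a b, Adj a b → D a b ∨ D b a)

/-- A digraph (relation) is kernel-perfect if every induced subdigraph has a kernel:
an independent set `S` such that every vertex outside `S` has an out-neighbor in `S`. -/
def KernelPerfect {α : Type*} (D : α → α → Prop) : Prop :=
  ∀ Z : Set α, ∃ S ⊆ Z, (∀ a ∈ S, ∀ b ∈ S, ¬ D a b) ∧
    ∀ z ∈ Z, z ∉ S → ∃ s ∈ S, D z s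

/-- Out-degree of a vertex in a digraph given as a relation. -/
noncomputable def outDeg {α : Type*} (D : α → α → Prop) (a : α) : ℕ := {b | D a b}.ncard

/-- Degree of a vertex. -/
noncomputable def deg {V : Type*} (G : SimpleGraph V) (v : V) : ℕ := (G.neighborSet v).ncard

/-- Maximum degree. -/
noncomputable def maxDeg {V : Type*} (G : SimpleGraph V) : ℕ := sSup (Set.range (deg G))

/-- `G` is `f`-edge-orientable: `L(G)` admits a kernel-perfect orientation with
`1 + d⁺(e) ≤ f e` for every edge `e`. -/
def EdgeOrientable {V : Type*} (G : SimpleGraph V) (f : G.edgeSet → ℕ) : Prop :=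
  ∃ D : G.edgeSet → G.edgeSet → Prop,
    IsOrientation (lineAdj G) D ∧ KernelPerfect D ∧ ∀ e, outDeg D e + 1 ≤ f e

open Classical in
/-- The function `f_{k,v}`: `deg v` on edges incident to `v`, and `k` elsewhere. -/
noncomputable def fkv {V : Type*} (G : SimpleGraph V) (k : ℕ) (v : V) (e : G.edgeSet) : ℕ :=
  if v ∈ (e : Sym2 V) then deg G v else k

/-- `G` is strongly `k`-edge-orientable. -/
def StronglyEdgeOrientable {V : Type*} (G : SimpleGraph V) (k : ℕ) : Prop :=
  ∀ v : V, EdgeOrientable G (fkv G k v)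

/-- `G` is `f`-edge-choosable. -/
def FEdgeChoosable {V : Type*} (G : SimpleGraph V) (f : G.edgeSet → ℕ) : Prop :=
  ∀ ℓ : G.edgeSet → Finset ℕ, (∀ e, f e ≤ (ℓ e).card) →
    ∃ φ : G.edgeSet → ℕ, (∀ e, φ e ∈ ℓ e) ∧
      ∀ e₁ e₂, lineAdj G e₁ e₂ → φ e₁ ≠ φ e₂

/-- `G ∈ G*`: any two distinct odd cycles share at most one edge. -/
def InGStar {V : Type*} (G : SimpleGraph V) : Prop :=
  ∀ (u w : V) (c₁ : G.Walk u u) (c₂ : G.Walk w w),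
    c₁.IsCycle → c₂.IsCycle → Odd c₁.length → Odd c₂.length →
    {e | e ∈ c₁.edges} ≠ {e | e ∈ c₂.edges} →
    ({e | e ∈ c₁.edges} ∩ {e | e ∈ c₂.edges}).ncard ≤ 1

/-- `G` is 2-connected: connected, and still connected after deleting any one vertex. -/
def TwoConn {V : Type*} (G : SimpleGraph V) : Prop :=
  G.Connected ∧ ∀ v : V, (G.induce {w | w ≠ v}).Connected

/-- A block of `G`: a maximal 2-connected subgraph. -/
def IsBlock {V : Type*} (G : SimpleGraph V) (B : G.Subgraph) : Prop :=
  TwoConn B.coe ∧ ∀ B' : G.Subgraph, TwoConn B'.coe → B ≤ B' → B = B'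

/-- Vertex type of the theta graph with path lengths `l`: two hubs
(`Sum.inl false`, `Sum.inl true`) plus the internal vertices of each path. -/
def ThetaVert (l : List ℕ) : Type := Bool ⊕ (Σ i : Fin l.length, Fin (l.get i - 1))

/-- The theta graph `Θ_{l₁,…,l_k}`: two hubs joined by internally disjoint paths,
the `i`-th of length `l i`. -/
def thetaGraph (l : List ℕ) : SimpleGraph (ThetaVert l) :=
  SimpleGraph.fromRel (fun a b =>
    match a, b with
    | Sum.inl false, Sum.inl true => 1 ∈ l
    | Sum.inl false, Sum.inr ⟨_, j⟩ => j.val = 0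
    | Sum.inl true, Sum.inr ⟨i, j⟩ => j.val = l.get i - 2
    | Sum.inr ⟨i, j⟩, Sum.inr ⟨i', j'⟩ => i.val = i'.val ∧ j'.val = j.val + 1
    | _, _ => False)

/-- `v` (outside `c`) touches `w ∈ c`: some `v,w`-path meets `c` only at `w`. -/
def Touches {V : Type*} (G : SimpleGraph V) {u : V} (c : G.Walk u u) (v w : V) : Prop :=
  w ∈ c.support ∧ ∃ p : G.Walk v w, p.IsPath ∧ ∀ x ∈ p.support, x ∈ c.support → x = w

/-- combining kernel-perfect orientations of `H[X]` and `H[Y]`,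
orienting all `[X,Y]` edges from `Y` to `X`, is a kernel-perfect orientation of `H`. -/
theorem stmt2 {V : Type*} (H : SimpleGraph V) (X Y : Set V)
    (hcover : X ∪ Y = Set.univ) (hdisj : Disjoint X Y)
    (DX DY D : V → V → Prop)
    (hDX1 : ∀ a b, DX a b → H.Adj a b ∧ a ∈ X ∧ b ∈ X)
    (hDX2 : ∀ a b, a ∈ X → b ∈ X → H.Adj a b → DX a b ∨ DX b a)
    (hDXkp : KernelPerfect DX)
    (hDY1 : ∀ a b, DY a b → H.Adj a b ∧ a ∈ Y ∧ b ∈ Y)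
    (hDY2 : ∀ a b, a ∈ Y → b ∈ Y → H.Adj a b → DY a b ∨ DY b a)
    (hDYkp : KernelPerfect DY)
    (hD : ∀ a b, D a b ↔ (DX a b ∨ DY a b ∨ (a ∈ Y ∧ b ∈ X ∧ H.Adj a b))) :
    IsOrientation H.Adj D ∧ KernelPerfect D := by
  have hmem : ∀ v : V, v ∈ X ∨ v ∈ Y := by
    intro v
    have : v ∈ X ∪ Y := hcover ▸ Set.mem_univ v
    exact this
  constructor
  · constructor
    · intro a b hab
      rcases (hD a b).1 hab with h | h | h
      · exact (hDX1 a b h).1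
      · exact (hDY1 a b h).1
      · exact h.2.2
    · intro a b hab
      rcases hmem a with ha | ha <;> rcases hmem b with hb | hb
      · rcases hDX2 a b ha hb hab with h | h
        · exact Or.inl ((hD a b).2 (Or.inl h))
        · exact Or.inr ((hD b a).2 (Or.inl h))
      · exact Or.inr ((hD b a).2 (Or.inr (Or.inr ⟨hb, ha, hab.symm⟩)))
      · exact Or.inl ((hD a b).2 (Or.inr (Or.inr ⟨ha, hb, hab⟩)))
      · rcases hDY2 a b ha hb hab with h | h
        · exact Or.inl ((hD a b).2 (Or.inr (Or.inl h)))
        · exact Or.inr ((hD b a).2 (Or.inr (Or.inl h)))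
  · intro Z
    obtain ⟨SX, hSXZ, hSXind, hSXdom⟩ := hDXkp (Z ∩ X)
    have hSXX : ∀ s ∈ SX, s ∈ X := fun s hs => (hSXZ hs).2
    obtain ⟨SY, hSYZ, hSYind, hSYdom⟩ :=
      hDYkp {y | y ∈ Z ∧ y ∈ Y ∧ ¬ ∃ s ∈ SX, H.Adj y s}
    refine ⟨SX ∪ SY, ?_, ?_, ?_⟩
    · intro a ha
      rcases ha with ha | ha
      · exact (hSXZ ha).1
      · exact (hSYZ ha).1
    · intro a ha b hb hab
      rcases (hD a b).1 hab with h | h | h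
      · obtain ⟨_, haX, hbX⟩ := hDX1 a b h
        rcases ha with ha | ha
        · rcases hb with hb | hb
          · exact hSXind a ha b hb h
          · exact hdisj.ne_of_mem hbX (hSYZ hb).2.1 rfl
        · exact hdisj.ne_of_mem haX (hSYZ ha).2.1 rfl
      · obtain ⟨_, haY, hbY⟩ := hDY1 a b h
        rcases ha with ha | ha
        · exact hdisj.ne_of_mem (hSXX a ha) haY rfl
        · rcases hb with hb | hb
          · exact hdisj.ne_of_mem (hSXX b hb) hbY rfl
          · exact hSYind a ha b hb h
      · obtain ⟨haY, hbX, hadj⟩ := h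
        rcases ha with ha | ha
        · exact hdisj.ne_of_mem (hSXX a ha) haY rfl
        · rcases hb with hb | hb
          · exact (hSYZ ha).2.2 ⟨b, hb, hadj⟩
          · exact hdisj.ne_of_mem hbX (hSYZ hb).2.1 rfl
    · intro z hz hzS
      have hzX : z ∉ SX := fun h => hzS (Or.inl h)
      have hzY : z ∉ SY := fun h => hzS (Or.inr h)
      rcases hmem z with hzx | hzy
      · obtain ⟨s, hs, hDs⟩ := hSXdom z ⟨hz, hzx⟩ hzX
        exact ⟨s, Or.inl hs, (hD z s).2 (Or.inl hDs)⟩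
      · by_cases hadj : ∃ s ∈ SX, H.Adj z s
        · obtain ⟨s, hs, hsadj⟩ := hadj
          exact ⟨s, Or.inl hs, (hD z s).2 (Or.inr (Or.inr ⟨hzy, hSXX s hs, hsadj⟩))⟩
        · obtain ⟨s, hs, hDs⟩ := hSYdom z ⟨hz, hzy, hadj⟩ hzY
          exact ⟨s, Or.inr hs, (hD z s).2 (Or.inr (Or.inl hDs))⟩
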